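/- arXiv:2504.04964 — 4 statements merged into one kernel-verified Lean document; each statement's English description precedes it below -/
import Mathlib

section
/- The set of 4-tuples (p,q,r,s) of positive integers with 2 ≤ p ≤ q ≤ r ≤ s and 1/2 + 1/p + 1/q + 1/r + 1/s = 1 (as rational numbers) is finite and has exactly 108 elements. -/
/-!
Clearing denominators turns the equation into `1/p + 1/q + 1/r + 1/s = 1/2`. Since the
reciprocals decrease, `1/2 ≤ 4/p` gives `p ≤ 8`, then `1/2 - 1/p ≤ 3/q` gives `q ≤ 18`, and
`1/2 - 1/p - 1/q ≤ 2/r` gives `r ≤ 4pq`; finally `s` is determined by `p, q, r`. This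
leaves a finite search, carried out by `decide`.
-/

open Finset

def IsEgyptianHalf (p q r s : ℕ) : Prop :=
  2 * (q * r * s + p * r * s + p * q * s + p * q * r) = p * q * r * s

instance (p q r s : ℕ) : Decidable (IsEgyptianHalf p q r s) := by
  unfold IsEgyptianHalf; infer_instance

lemma isEgyptianHalf_iff {p q r s : ℕ} (hp : 0 < p) (hq : 0 < q) (hr : 0 < r) (hs : 0 < s) :
    IsEgyptianHalf p q r s ↔ (1 : ℚ) / 2 + 1 / p + 1 / q + 1 / r + 1 / s = 1 := by
  rw [IsEgyptianHalf, ← Nat.cast_inj (R := ℚ)]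
  push_cast
  field_simp
  constructor <;> intro h <;> linear_combination h

/-- `gap p q r / (2pqr) = 1/2 - 1/p - 1/q - 1/r` whenever the right-hand side is positive. -/
def gap (p q r : ℕ) : ℕ := p * q * r - 2 * (q * r + p * r + p * q)

def lastDenom (p q r : ℕ) : ℕ := 2 * p * q * r / gap p q r

namespace IsEgyptianHalf

variable {p q r s : ℕ}

lemma ne_two (h : IsEgyptianHalf p q r s) (hq : 0 < q) (hr : 0 < r) (hs : 0 < s) : p ≠ 2 := by
  rintro rfl
  unfold IsEgyptianHalf at h
  nlinarith [Nat.mul_pos (Nat.mul_pos hq hr) hs, Nat.mul_pos hq hr]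

lemma le_eight (h : IsEgyptianHalf p q r s) (hq : 0 < q) (hpq : p ≤ q) (hqr : q ≤ r)
    (hrs : r ≤ s) : p ≤ 8 := by
  unfold IsEgyptianHalf at h
  have hr := hq.trans_le hqr
  have hs := hr.trans_le hrs
  refine Nat.le_of_mul_le_mul_right (c := q * r * s) ?_ (by positivity)
  nlinarith [Nat.mul_le_mul_right (r * s) hpq, Nat.mul_le_mul_right (q * s) (hpq.trans hqr),
    Nat.mul_le_mul_right (q * r) (hpq.trans (hqr.trans hrs))]

lemma le_eighteen (h : IsEgyptianHalf p q r s) (hp : 3 ≤ p) (hq : 0 < q) (hqr : q ≤ r)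
    (hrs : r ≤ s) : q ≤ 18 := by
  unfold IsEgyptianHalf at h
  have hr := hq.trans_le hqr
  have hs := hr.trans_le hrs
  have : p * q ≤ 2 * q + 6 * p := by
    refine Nat.le_of_mul_le_mul_right (c := r * s) ?_ (by positivity)
    nlinarith [Nat.mul_le_mul_right (p * s) hqr, Nat.mul_le_mul_right (p * r) (hqr.trans hrs)]
  nlinarith

lemma mul_gap (h : IsEgyptianHalf p q r s) : s * gap p q r = 2 * p * q * r := by
  unfold IsEgyptianHalf at h
  rw [gap, Nat.mul_sub]
  apply Nat.sub_eq_of_eq_add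
  linarith

lemma gap_pos (h : IsEgyptianHalf p q r s) (hp : 0 < p) (hq : 0 < q) (hr : 0 < r) :
    0 < gap p q r := by
  refine Nat.pos_of_ne_zero fun h0 => ?_
  have := h.mul_gap
  rw [h0, mul_zero] at this
  exact (show 0 < 2 * p * q * r by positivity).ne this

lemma eq_lastDenom (h : IsEgyptianHalf p q r s) (hp : 0 < p) (hq : 0 < q) (hr : 0 < r) :
    s = lastDenom p q r :=
  Nat.eq_div_of_mul_eq_left (h.gap_pos hp hq hr).ne' h.mul_gap

lemma le_four_mul (h : IsEgyptianHalf p q r s) (hp : 0 < p) (hq : 0 < q) (hr : 0 < r)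
    (hrs : r ≤ s) : r ≤ 4 * p * q := by
  have hgap_pos := h.gap_pos hp hq hr
  have hgap_le : gap p q r ≤ 2 * p * q := by
    refine Nat.le_of_mul_le_mul_left ?_ hr
    calc r * gap p q r ≤ s * gap p q r := Nat.mul_le_mul_right _ hrs
      _ = r * (2 * p * q) := by rw [h.mul_gap]; ring
  unfold gap at hgap_pos hgap_le
  have hupper : p * q * r ≤ 2 * (q * r + p * r + p * q) + 2 * p * q := by omega
  have hlower : 2 * (q * r + p * r + p * q) < p * q * r := by omega
  have hpq : 2 * p + 2 * q < p * q := Nat.lt_of_mul_lt_mul_left (a := r) (by nlinarith)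
  nlinarith

end IsEgyptianHalf

def solutions : Finset (ℕ × ℕ × ℕ × ℕ) :=
  (Icc 3 8).biUnion fun p => (Icc p 18).biUnion fun q =>
    ((Icc q (4 * p * q)).filter fun r =>
        r ≤ lastDenom p q r ∧ IsEgyptianHalf p q r (lastDenom p q r)).image
      fun r => (p, q, r, lastDenom p q r)

set_option maxRecDepth 10000 in
theorem card_solutions : solutions.card = 108 := by decide

theorem coe_solutions :
    (solutions : Set (ℕ × ℕ × ℕ × ℕ)) =
      {x : ℕ × ℕ × ℕ × ℕ |
        0 < x.1 ∧ 0 < x.2.1 ∧ 0 < x.2.2.1 ∧ 0 < x.2.2.2 ∧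
        2 ≤ x.1 ∧ x.1 ≤ x.2.1 ∧ x.2.1 ≤ x.2.2.1 ∧ x.2.2.1 ≤ x.2.2.2 ∧
        (1 : ℚ) / 2 + 1 / x.1 + 1 / x.2.1 + 1 / x.2.2.1 + 1 / x.2.2.2 = 1} := by
  ext ⟨p, q, r, s⟩
  simp only [mem_coe, Set.mem_ofPred_eq, solutions, mem_biUnion, mem_image, mem_filter,
    mem_Icc, Prod.mk.injEq]
  constructor
  · rintro ⟨p, ⟨hp3, -⟩, q, ⟨hpq, -⟩, r, ⟨⟨hqr, -⟩, hrs, h⟩, rfl, rfl, rfl, rfl⟩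
    have hr : 0 < r := by omega
    exact ⟨by omega, by omega, hr, hr.trans_le hrs, by omega, hpq, hqr, hrs,
      (isEgyptianHalf_iff (by omega) (by omega) hr (hr.trans_le hrs)).1 h⟩
  · rintro ⟨hp, hq, hr, hs, hp2, hpq, hqr, hrs, hsum⟩
    have h := (isEgyptianHalf_iff hp hq hr hs).2 hsum
    have hp3 : 3 ≤ p := by have := h.ne_two hq hr hs; omega
    obtain rfl := h.eq_lastDenom hp hq hr
    exact ⟨p, ⟨hp3, h.le_eight hq hpq hqr hrs⟩, q, ⟨hpq, h.le_eighteen hp3 hq hqr hrs⟩, r,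
      ⟨⟨hqr, h.le_four_mul hp hq hr hrs⟩, hrs, h⟩, rfl, rfl, rfl, rfl⟩

/-- The solutions `(p,q,r,s)` with `2 ≤ p ≤ q ≤ r ≤ s` of
`1/2 + 1/p + 1/q + 1/r + 1/s = 1` form a finite set with exactly 108 elements. -/
theorem stmt_5 :
    ({x : ℕ × ℕ × ℕ × ℕ |
        0 < x.1 ∧ 0 < x.2.1 ∧ 0 < x.2.2.1 ∧ 0 < x.2.2.2 ∧
        2 ≤ x.1 ∧ x.1 ≤ x.2.1 ∧ x.2.1 ≤ x.2.2.1 ∧ x.2.2.1 ≤ x.2.2.2 ∧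
        (1 : ℚ) / 2 + 1 / x.1 + 1 / x.2.1 + 1 / x.2.2.1 + 1 / x.2.2.2 = 1}).Finite ∧
    ({x : ℕ × ℕ × ℕ × ℕ |
        0 < x.1 ∧ 0 < x.2.1 ∧ 0 < x.2.2.1 ∧ 0 < x.2.2.2 ∧
        2 ≤ x.1 ∧ x.1 ≤ x.2.1 ∧ x.2.1 ≤ x.2.2.1 ∧ x.2.2.1 ≤ x.2.2.2 ∧
        (1 : ℚ) / 2 + 1 / x.1 + 1 / x.2.1 + 1 / x.2.2.1 + 1 / x.2.2.2 = 1}).ncard = 108 := by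
  rw [← coe_solutions, Set.ncard_coe_finset, card_solutions]
  exact ⟨solutions.finite_toSet, rfl⟩
end

section
/- Let R = ℂ[s, x₀, x₁, x₂, x₃] be the polynomial ring in five variables with weights w(s) = 1, w(x₀) = 1, w(x₁) = 2, w(x₂) = 3, w(x₃) = 7, let F = s¹⁴ + x₀¹⁴ + x₁⁷ − x₂⁴·x₁ − x₃², and let 𝔍_F ⊆ R be the Jacobian ideal of F, i.e. the ideal generated by the five partial derivatives ∂F/∂s, ∂F/∂x₀, ∂F/∂x₁, ∂F/∂x₂, ∂F/∂x₃. Then the image in R/𝔍_F of the ℂ-subspace of weighted-homogeneous polynomials of weighted degree 14 is a ℂ-vector space of dimension 132. -/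
open MvPolynomial

noncomputable section CY

/-- plain weight function -/
def wt5 (d : Fin 5 →₀ ℕ) : ℕ := d 0 + d 1 + 2 * d 2 + 3 * d 3 + 7 * d 4

theorem wt5_def (d : Fin 5 →₀ ℕ) : wt5 d = d 0 + d 1 + 2 * d 2 + 3 * d 3 + 7 * d 4 := rfl

theorem weight_eq_wt5 (d : Fin 5 →₀ ℕ) :
    (Finsupp.weight ![1, 1, 2, 3, 7] : (Fin 5 →₀ ℕ) →+ ℕ) d = wt5 d := by
  rw [Finsupp.weight_apply, Finsupp.sum_fintype _ _ (by intro i; rw [zero_smul])]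
  rw [Fin.sum_univ_five]
  simp [wt5_def, Matrix.cons_val_zero, Matrix.cons_val_one]
  ring

/-- normal form of a monomial -/
def nf (d : Fin 5 →₀ ℕ) : MvPolynomial (Fin 5) ℂ :=
  if wt5 d = 14 then
    if d 4 = 0 then
      if 1 ≤ d 2 ∧ 3 ≤ d 3 then 0
      else if 13 ≤ d 0 then 0
      else if 13 ≤ d 1 then 0
      else if d 2 = 7 then 0
      else if d 2 = 6 then
        (7 : ℂ)⁻¹ • monomial (Finsupp.single 0 (d 0) + Finsupp.single 1 (d 1)
          + Finsupp.single 3 4) 1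
      else monomial d 1
    else 0
  else 0

theorem nf_eq_zero {d : Fin 5 →₀ ℕ}
    (h : wt5 d ≠ 14 ∨ d 4 ≠ 0 ∨ (1 ≤ d 2 ∧ 3 ≤ d 3) ∨ 13 ≤ d 0 ∨ 13 ≤ d 1 ∨ d 2 = 7) :
    nf d = 0 := by
  unfold nf; split_ifs <;> first | rfl | omega

theorem nf_std {d : Fin 5 →₀ ℕ} (h : wt5 d = 14) (h4 : d 4 = 0)
    (h23 : ¬(1 ≤ d 2 ∧ 3 ≤ d 3)) (h0 : d 0 ≤ 12) (h1 : d 1 ≤ 12) (h2 : d 2 ≤ 5) :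
    nf d = monomial d 1 := by
  unfold nf; split_ifs <;> first | rfl | omega

theorem nf_six {d : Fin 5 →₀ ℕ} (h : wt5 d = 14) (h4 : d 4 = 0) (h2 : d 2 = 6) :
    nf d = (7 : ℂ)⁻¹ • monomial (Finsupp.single 0 (d 0) + Finsupp.single 1 (d 1)
      + Finsupp.single 3 4) 1 := by
  have hval := wt5_def d
  unfold nf; split_ifs <;> first | rfl | omega

/-- the normal form linear map -/
def Phi : MvPolynomial (Fin 5) ℂ →ₗ[ℂ] MvPolynomial (Fin 5) ℂ :=
  (basisMonomials (Fin 5) ℂ).constr ℂ nf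

theorem Phi_monomial (d : Fin 5 →₀ ℕ) (a : ℂ) : Phi (monomial d a) = a • nf d := by
  have : monomial d a = a • monomial d 1 := by rw [smul_monomial, smul_eq_mul, mul_one]
  rw [this, map_smul]
  congr 1
  have := (basisMonomials (Fin 5) ℂ).constr_basis ℂ nf d
  rwa [coe_basisMonomials] at this


-- coordinate helpers
theorem addsingle_same (d : Fin 5 →₀ ℕ) (i : Fin 5) (k : ℕ) :
    (d + Finsupp.single i k : Fin 5 →₀ ℕ) i = d i + k := by simp

theorem addsingle_ne (d : Fin 5 →₀ ℕ) {i j : Fin 5} (h : i ≠ j) (k : ℕ) :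
    (d + Finsupp.single i k : Fin 5 →₀ ℕ) j = d j := by
  simp [Finsupp.single_apply, h]

theorem nf_shift0 (d : Fin 5 →₀ ℕ) : nf (d + Finsupp.single 0 13) = 0 := by
  apply nf_eq_zero
  have := addsingle_same d 0 13
  omega

theorem nf_shift1 (d : Fin 5 →₀ ℕ) : nf (d + Finsupp.single 1 13) = 0 := by
  apply nf_eq_zero
  have := addsingle_same d 1 13
  omega

theorem nf_shift3 (d : Fin 5 →₀ ℕ) :
    nf (d + (Finsupp.single 2 1 + Finsupp.single 3 3)) = 0 := by
  apply nf_eq_zero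
  have h2 : (d + (Finsupp.single 2 1 + Finsupp.single 3 3) : Fin 5 →₀ ℕ) 2 = d 2 + 1 := by
    simp [Finsupp.single_apply]
  have h3 : (d + (Finsupp.single 2 1 + Finsupp.single 3 3) : Fin 5 →₀ ℕ) 3 = d 3 + 3 := by
    simp [Finsupp.single_apply]
  omega

theorem nf_shift4 (d : Fin 5 →₀ ℕ) : nf (d + Finsupp.single 4 1) = 0 := by
  apply nf_eq_zero
  have := addsingle_same d 4 1
  omega

theorem nf_rel (d : Fin 5 →₀ ℕ) :
    (7 : ℂ) • nf (d + Finsupp.single 2 6) = nf (d + Finsupp.single 3 4) := by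
  have hD0 : (d + Finsupp.single 2 6 : Fin 5 →₀ ℕ) 0 = d 0 := addsingle_ne d (by decide) 6
  have hD1 : (d + Finsupp.single 2 6 : Fin 5 →₀ ℕ) 1 = d 1 := addsingle_ne d (by decide) 6
  have hD2 : (d + Finsupp.single 2 6 : Fin 5 →₀ ℕ) 2 = d 2 + 6 := addsingle_same d 2 6
  have hD3 : (d + Finsupp.single 2 6 : Fin 5 →₀ ℕ) 3 = d 3 := addsingle_ne d (by decide) 6
  have hD4 : (d + Finsupp.single 2 6 : Fin 5 →₀ ℕ) 4 = d 4 := addsingle_ne d (by decide) 6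
  have hE0 : (d + Finsupp.single 3 4 : Fin 5 →₀ ℕ) 0 = d 0 := addsingle_ne d (by decide) 4
  have hE1 : (d + Finsupp.single 3 4 : Fin 5 →₀ ℕ) 1 = d 1 := addsingle_ne d (by decide) 4
  have hE2 : (d + Finsupp.single 3 4 : Fin 5 →₀ ℕ) 2 = d 2 := addsingle_ne d (by decide) 4
  have hE3 : (d + Finsupp.single 3 4 : Fin 5 →₀ ℕ) 3 = d 3 + 4 := addsingle_same d 3 4
  have hE4 : (d + Finsupp.single 3 4 : Fin 5 →₀ ℕ) 4 = d 4 := addsingle_ne d (by decide) 4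
  by_cases hw : wt5 d = 2
  · rw [wt5_def] at hw
    by_cases h2 : d 2 = 1
    · -- x₁⁷ vs x₁x₂⁴ : both normal forms vanish
      rw [nf_eq_zero (by omega), nf_eq_zero (by omega), smul_zero]
    · -- d 2 = 0, d3 = d4 = 0, d0 + d1 = 2
      rw [nf_six (by rw [wt5_def]; omega) (by omega) (by omega)]
      rw [hD0, hD1]
      have hstd : nf (d + Finsupp.single 3 4) = monomial (d + Finsupp.single 3 4) 1 := by
        unfold nf
        have hval := wt5_def (d + Finsupp.single 3 4)
        split_ifs <;> first | rfl | omega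
      rw [hstd, smul_smul]
      norm_num
      congr 1
      ext j
      fin_cases j <;>
        simp_all [Finsupp.single_apply] <;> omega
  · have hv := wt5_def d
    rw [nf_eq_zero (d := d + Finsupp.single 2 6) (by left; rw [wt5_def]; omega),
      nf_eq_zero (d := d + Finsupp.single 3 4) (by left; rw [wt5_def]; omega), smul_zero]

def L : List (ℕ × ℕ × ℕ × ℕ) := [
  (12, 2, 0, 0),
  (11, 3, 0, 0),
  (10, 4, 0, 0),
  (9, 5, 0, 0),
  (8, 6, 0, 0),
  (7, 7, 0, 0),
  (6, 8, 0, 0),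
  (5, 9, 0, 0),
  (4, 10, 0, 0),
  (3, 11, 0, 0),
  (2, 12, 0, 0),
  (12, 0, 1, 0),
  (11, 1, 1, 0),
  (10, 2, 1, 0),
  (9, 3, 1, 0),
  (8, 4, 1, 0),
  (7, 5, 1, 0),
  (6, 6, 1, 0),
  (5, 7, 1, 0),
  (4, 8, 1, 0),
  (3, 9, 1, 0),
  (2, 10, 1, 0),
  (1, 11, 1, 0),
  (0, 12, 1, 0),
  (10, 0, 2, 0),
  (9, 1, 2, 0),
  (8, 2, 2, 0),
  (7, 3, 2, 0),
  (6, 4, 2, 0),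
  (5, 5, 2, 0),
  (4, 6, 2, 0),
  (3, 7, 2, 0),
  (2, 8, 2, 0),
  (1, 9, 2, 0),
  (0, 10, 2, 0),
  (8, 0, 3, 0),
  (7, 1, 3, 0),
  (6, 2, 3, 0),
  (5, 3, 3, 0),
  (4, 4, 3, 0),
  (3, 5, 3, 0),
  (2, 6, 3, 0),
  (1, 7, 3, 0),
  (0, 8, 3, 0),
  (6, 0, 4, 0),
  (5, 1, 4, 0),
  (4, 2, 4, 0),
  (3, 3, 4, 0),
  (2, 4, 4, 0),
  (1, 5, 4, 0),
  (0, 6, 4, 0),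
  (4, 0, 5, 0),
  (3, 1, 5, 0),
  (2, 2, 5, 0),
  (1, 3, 5, 0),
  (0, 4, 5, 0),
  (11, 0, 0, 1),
  (10, 1, 0, 1),
  (9, 2, 0, 1),
  (8, 3, 0, 1),
  (7, 4, 0, 1),
  (6, 5, 0, 1),
  (5, 6, 0, 1),
  (4, 7, 0, 1),
  (3, 8, 0, 1),
  (2, 9, 0, 1),
  (1, 10, 0, 1),
  (0, 11, 0, 1),
  (9, 0, 1, 1),
  (8, 1, 1, 1),
  (7, 2, 1, 1),
  (6, 3, 1, 1),
  (5, 4, 1, 1),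
  (4, 5, 1, 1),
  (3, 6, 1, 1),
  (2, 7, 1, 1),
  (1, 8, 1, 1),
  (0, 9, 1, 1),
  (7, 0, 2, 1),
  (6, 1, 2, 1),
  (5, 2, 2, 1),
  (4, 3, 2, 1),
  (3, 4, 2, 1),
  (2, 5, 2, 1),
  (1, 6, 2, 1),
  (0, 7, 2, 1),
  (5, 0, 3, 1),
  (4, 1, 3, 1),
  (3, 2, 3, 1),
  (2, 3, 3, 1),
  (1, 4, 3, 1),
  (0, 5, 3, 1),
  (3, 0, 4, 1),
  (2, 1, 4, 1),
  (1, 2, 4, 1),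
  (0, 3, 4, 1),
  (1, 0, 5, 1),
  (0, 1, 5, 1),
  (8, 0, 0, 2),
  (7, 1, 0, 2),
  (6, 2, 0, 2),
  (5, 3, 0, 2),
  (4, 4, 0, 2),
  (3, 5, 0, 2),
  (2, 6, 0, 2),
  (1, 7, 0, 2),
  (0, 8, 0, 2),
  (6, 0, 1, 2),
  (5, 1, 1, 2),
  (4, 2, 1, 2),
  (3, 3, 1, 2),
  (2, 4, 1, 2),
  (1, 5, 1, 2),
  (0, 6, 1, 2),
  (4, 0, 2, 2),
  (3, 1, 2, 2),
  (2, 2, 2, 2),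
  (1, 3, 2, 2),
  (0, 4, 2, 2),
  (2, 0, 3, 2),
  (1, 1, 3, 2),
  (0, 2, 3, 2),
  (0, 0, 4, 2),
  (5, 0, 0, 3),
  (4, 1, 0, 3),
  (3, 2, 0, 3),
  (2, 3, 0, 3),
  (1, 4, 0, 3),
  (0, 5, 0, 3),
  (2, 0, 0, 4),
  (1, 1, 0, 4),
  (0, 2, 0, 4)]

def Pq (q : ℕ × ℕ × ℕ × ℕ) : Prop :=
  q.1 + q.2.1 + 2 * q.2.2.1 + 3 * q.2.2.2 = 14 ∧ q.1 ≤ 12 ∧ q.2.1 ≤ 12 ∧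
    q.2.2.1 ≤ 5 ∧ (q.2.2.1 = 0 ∨ q.2.2.2 ≤ 2)

instance : DecidablePred Pq := fun q => by unfold Pq; infer_instance

set_option maxRecDepth 100000 in
theorem L_P : ∀ q ∈ L, Pq q := by decide

set_option maxRecDepth 100000 in
theorem L_len : L.length = 132 := by decide

set_option maxRecDepth 100000 in
theorem L_nodup : L.Nodup := by decide

set_option maxRecDepth 1000000 in
theorem L_complete : ∀ a ∈ Finset.range 13, ∀ b ∈ Finset.range 13,
    ∀ c ∈ Finset.range 6, ∀ e ∈ Finset.range 5,
    Pq (a, b, c, e) → (a, b, c, e) ∈ L := by decide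

theorem mem_L_of_Pq {q : ℕ × ℕ × ℕ × ℕ} (h : Pq q) : q ∈ L := by
  obtain ⟨a, b, c, e⟩ := q
  obtain ⟨h1, h2, h3, h4, h5⟩ := h
  dsimp only at h1 h2 h3 h4 h5
  exact L_complete a (Finset.mem_range.mpr (by omega)) b (Finset.mem_range.mpr (by omega))
    c (Finset.mem_range.mpr (by omega)) e (Finset.mem_range.mpr (by omega))
    ⟨h1, h2, h3, h4, h5⟩

/-- tuple to exponent vector -/
def tf (q : ℕ × ℕ × ℕ × ℕ) : Fin 5 →₀ ℕ :=
  Finsupp.single 0 q.1 + Finsupp.single 1 q.2.1 + Finsupp.single 2 q.2.2.1 +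
    Finsupp.single 3 q.2.2.2

theorem tf_0 (q : ℕ × ℕ × ℕ × ℕ) : tf q 0 = q.1 := by simp [tf, Finsupp.single_apply]
theorem tf_1 (q : ℕ × ℕ × ℕ × ℕ) : tf q 1 = q.2.1 := by simp [tf, Finsupp.single_apply]
theorem tf_2 (q : ℕ × ℕ × ℕ × ℕ) : tf q 2 = q.2.2.1 := by simp [tf, Finsupp.single_apply]
theorem tf_3 (q : ℕ × ℕ × ℕ × ℕ) : tf q 3 = q.2.2.2 := by simp [tf, Finsupp.single_apply]
theorem tf_4 (q : ℕ × ℕ × ℕ × ℕ) : tf q 4 = 0 := by simp [tf, Finsupp.single_apply]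

theorem tf_inj : Function.Injective tf := by
  intro q q' h
  have h0 := congrArg (fun d : Fin 5 →₀ ℕ => d 0) h
  have h1 := congrArg (fun d : Fin 5 →₀ ℕ => d 1) h
  have h2 := congrArg (fun d : Fin 5 →₀ ℕ => d 2) h
  have h3 := congrArg (fun d : Fin 5 →₀ ℕ => d 3) h
  simp only [tf_0, tf_1, tf_2, tf_3] at h0 h1 h2 h3
  obtain ⟨a, b, c, e⟩ := q; obtain ⟨a', b', c', e'⟩ := q'
  simp_all

theorem wt5_tf (q : ℕ × ℕ × ℕ × ℕ) :
    wt5 (tf q) = q.1 + q.2.1 + 2 * q.2.2.1 + 3 * q.2.2.2 := by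
  rw [wt5_def, tf_0, tf_1, tf_2, tf_3, tf_4]; ring

theorem nf_tf {q : ℕ × ℕ × ℕ × ℕ} (h : Pq q) : nf (tf q) = monomial (tf q) 1 := by
  obtain ⟨h1, h2, h3, h4, h5⟩ := h
  exact nf_std (by rw [wt5_tf]; omega) (tf_4 q)
    (by rw [tf_2, tf_3]; omega) (by rw [tf_0]; omega) (by rw [tf_1]; omega)
    (by rw [tf_2]; omega)

theorem sub_single_add {d : Fin 5 →₀ ℕ} {i : Fin 5} {k : ℕ} (h : k ≤ d i) :
    d - Finsupp.single i k + Finsupp.single i k = d := by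
  ext j
  by_cases hj : i = j
  · subst hj
    simp only [Finsupp.tsub_apply, Finsupp.add_apply, Finsupp.single_eq_same]
    omega
  · simp [Finsupp.tsub_apply, Finsupp.single_apply, hj]

theorem sub_single2_add {d : Fin 5 →₀ ℕ} (h2 : 1 ≤ d 2) (h3 : 3 ≤ d 3) :
    d - (Finsupp.single 2 1 + Finsupp.single 3 3) +
      (Finsupp.single 2 1 + Finsupp.single 3 3) = d := by
  ext j
  fin_cases j <;>
    simp [Finsupp.tsub_apply, Finsupp.single_apply] <;> omega

end CY


/-- For `F = s¹⁴ + x₀¹⁴ + x₁⁷ - x₂⁴x₁ - x₃²` with weights `(1,1,2,3,7)`, the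
image in `R/𝔍_F` of the weighted-homogeneous polynomials of weighted degree `14`
has dimension `132` over `ℂ`. -/
theorem stmt_15 (w : Fin 5 → ℕ) (hw : w = ![1, 1, 2, 3, 7])
    (F : MvPolynomial (Fin 5) ℂ)
    (hF : F = X 0 ^ 14 + X 1 ^ 14 + X 2 ^ 7 - X 3 ^ 4 * X 2 - X 4 ^ 2)
    (J : Ideal (MvPolynomial (Fin 5) ℂ))
    (hJ : J = Ideal.span (Set.range fun i : Fin 5 => pderiv i F)) :
    Module.finrank ℂ
      (Submodule.map (Ideal.Quotient.mkₐ ℂ J).toLinearMap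
        (weightedHomogeneousSubmodule ℂ w 14)) = 132 := by
  subst hw
  set π := (Ideal.Quotient.mkₐ ℂ J).toLinearMap with hπd
  -- the partial derivatives in monomial form
  have hg0 : pderiv 0 F = monomial (Finsupp.single 0 13) 14 := by
    have h : pderiv 0 F = C 14 * X 0 ^ 13 := by
      rw [hF]; simp [pderiv_pow, pderiv_X_of_ne, pderiv_X_self, map_ofNat]
      try ring
    rw [h, C_mul_X_pow_eq_monomial]
  have hg1 : pderiv 1 F = monomial (Finsupp.single 1 13) 14 := by
    have h : pderiv 1 F = C 14 * X 1 ^ 13 := by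
      rw [hF]; simp [pderiv_pow, pderiv_X_of_ne, pderiv_X_self, map_ofNat]
      try ring
    rw [h, C_mul_X_pow_eq_monomial]
  have hg2 : pderiv 2 F = monomial (Finsupp.single 2 6) 7 - monomial (Finsupp.single 3 4) 1 := by
    have h : pderiv 2 F = C 7 * X 2 ^ 6 - X 3 ^ 4 := by
      rw [hF]; simp [pderiv_pow, pderiv_X_of_ne, pderiv_X_self, map_ofNat]
      try ring
    rw [h, C_mul_X_pow_eq_monomial, X_pow_eq_monomial]
  have hg3 : pderiv 3 F = monomial (Finsupp.single 2 1 + Finsupp.single 3 3) (-4) := by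
    have h : pderiv 3 F = C (-4) * (X 3 ^ 3 * X 2) := by
      rw [hF]; simp [pderiv_pow, pderiv_X_of_ne, pderiv_X_self, map_ofNat]
      try ring
    have h2 : (X 3 ^ 3 * X 2 : MvPolynomial (Fin 5) ℂ) =
        monomial (Finsupp.single 2 1 + Finsupp.single 3 3) 1 := by
      rw [X_pow_eq_monomial,
        show (X 2 : MvPolynomial (Fin 5) ℂ) = monomial (Finsupp.single 2 1) 1 from rfl,
        monomial_mul, one_mul, add_comm]
    rw [h, h2, C_mul_monomial, mul_one]
  have hg4 : pderiv 4 F = monomial (Finsupp.single 4 1) (-2) := by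
    have h : pderiv 4 F = C (-2) * X 4 := by
      rw [hF]; simp [pderiv_pow, pderiv_X_of_ne, pderiv_X_self, map_ofNat]
      try ring
    rw [h, ← pow_one (X 4 : MvPolynomial (Fin 5) ℂ), C_mul_X_pow_eq_monomial]
  -- Phi kills multiples of the generators
  have P0 : ∀ p : MvPolynomial (Fin 5) ℂ, Phi (p * pderiv 0 F) = 0 := by
    intro p
    induction p using MvPolynomial.induction_on' with
    | monomial d a => rw [hg0, monomial_mul, Phi_monomial, nf_shift0, smul_zero]
    | add p q hp hq => rw [add_mul, map_add, hp, hq, add_zero]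
  have P1 : ∀ p : MvPolynomial (Fin 5) ℂ, Phi (p * pderiv 1 F) = 0 := by
    intro p
    induction p using MvPolynomial.induction_on' with
    | monomial d a => rw [hg1, monomial_mul, Phi_monomial, nf_shift1, smul_zero]
    | add p q hp hq => rw [add_mul, map_add, hp, hq, add_zero]
  have P2 : ∀ p : MvPolynomial (Fin 5) ℂ, Phi (p * pderiv 2 F) = 0 := by
    intro p
    induction p using MvPolynomial.induction_on' with
    | monomial d a =>
        rw [hg2, mul_sub, monomial_mul, monomial_mul, map_sub, Phi_monomial, Phi_monomial,
          mul_one, mul_smul, nf_rel, sub_self]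
    | add p q hp hq => rw [add_mul, map_add, hp, hq, add_zero]
  have P3 : ∀ p : MvPolynomial (Fin 5) ℂ, Phi (p * pderiv 3 F) = 0 := by
    intro p
    induction p using MvPolynomial.induction_on' with
    | monomial d a => rw [hg3, monomial_mul, Phi_monomial, nf_shift3, smul_zero]
    | add p q hp hq => rw [add_mul, map_add, hp, hq, add_zero]
  have P4 : ∀ p : MvPolynomial (Fin 5) ℂ, Phi (p * pderiv 4 F) = 0 := by
    intro p
    induction p using MvPolynomial.induction_on' with
    | monomial d a => rw [hg4, monomial_mul, Phi_monomial, nf_shift4, smul_zero]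
    | add p q hp hq => rw [add_mul, map_add, hp, hq, add_zero]
  have PhiJ : ∀ p ∈ J, Phi p = 0 := by
    intro p hp
    rw [hJ] at hp
    obtain ⟨c, hc⟩ := Ideal.mem_span_range_iff_exists_fun.mp hp
    rw [← hc, Fin.sum_univ_five, map_add, map_add, map_add, map_add,
      P0, P1, P2, P3, P4]
    simp
  -- membership of bad monomials in J
  have hgJ : ∀ i : Fin 5, pderiv i F ∈ J := fun i => hJ ▸ Ideal.subset_span ⟨i, rfl⟩
  have memJ_c : ∀ (d : Fin 5 →₀ ℕ) (c : ℂ), monomial d (1:ℂ) ∈ J → monomial d c ∈ J := by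
    intro d c h
    have he : monomial d c = C c * monomial d 1 := by rw [C_mul_monomial, mul_one]
    rw [he]; exact J.mul_mem_left _ h
  have mem4 : ∀ d : Fin 5 →₀ ℕ, 1 ≤ d 4 → monomial d (1:ℂ) ∈ J := by
    intro d h
    have he : monomial d (1:ℂ) = monomial (d - Finsupp.single 4 1) (-2)⁻¹ * pderiv 4 F := by
      rw [hg4, monomial_mul, sub_single_add h]; norm_num
    rw [he]; exact J.mul_mem_left _ (hgJ 4)
  have mem0 : ∀ d : Fin 5 →₀ ℕ, 13 ≤ d 0 → monomial d (1:ℂ) ∈ J := by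
    intro d h
    have he : monomial d (1:ℂ) = monomial (d - Finsupp.single 0 13) 14⁻¹ * pderiv 0 F := by
      rw [hg0, monomial_mul, sub_single_add h]; norm_num
    rw [he]; exact J.mul_mem_left _ (hgJ 0)
  have mem1 : ∀ d : Fin 5 →₀ ℕ, 13 ≤ d 1 → monomial d (1:ℂ) ∈ J := by
    intro d h
    have he : monomial d (1:ℂ) = monomial (d - Finsupp.single 1 13) 14⁻¹ * pderiv 1 F := by
      rw [hg1, monomial_mul, sub_single_add h]; norm_num
    rw [he]; exact J.mul_mem_left _ (hgJ 1)
  have mem3 : ∀ d : Fin 5 →₀ ℕ, 1 ≤ d 2 → 3 ≤ d 3 → monomial d (1:ℂ) ∈ J := by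
    intro d h2 h3
    have he : monomial d (1:ℂ) =
        monomial (d - (Finsupp.single 2 1 + Finsupp.single 3 3)) (-4)⁻¹ * pderiv 3 F := by
      rw [hg3, monomial_mul, sub_single2_add h2 h3]; norm_num
    rw [he]; exact J.mul_mem_left _ (hgJ 3)
  have mem27 : monomial (Finsupp.single 2 7) (1:ℂ) ∈ J := by
    have key : monomial (Finsupp.single 2 7) (1:ℂ) =
        monomial (Finsupp.single 2 1) 7⁻¹ * pderiv 2 F +
          monomial (Finsupp.single 2 1 + Finsupp.single 3 4) 7⁻¹ := by
      rw [hg2, mul_sub, monomial_mul, monomial_mul, mul_one, sub_add_cancel, ← Finsupp.single_add]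
      norm_num
    rw [key]
    refine J.add_mem (J.mul_mem_left _ (hgJ 2)) (memJ_c _ _ (mem3 _ ?_ ?_)) <;>
      simp [Finsupp.single_apply]
  -- the quotient map kills J
  have πzero : ∀ x ∈ J, π x = 0 := by
    intro x hx
    show Ideal.Quotient.mk J x = 0
    exact Ideal.Quotient.eq_zero_iff_mem.mpr hx
  -- the candidate basis family
  set u : Fin L.length → (MvPolynomial (Fin 5) ℂ ⧸ J) :=
    fun i => π (monomial (tf (L.get i)) 1) with hu
  -- linear independence
  have mono_li : LinearIndependent ℂ
      (fun i : Fin L.length => monomial (tf (L.get i)) (1:ℂ)) := by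
    have h := (basisMonomials (Fin 5) ℂ).linearIndependent.comp
      (fun i : Fin L.length => tf (L.get i))
      (tf_inj.comp (List.nodup_iff_injective_get.mp L_nodup))
    simpa [coe_basisMonomials, Function.comp_def] using h
  have hdisj : Disjoint (Submodule.span ℂ
      (Set.range fun i : Fin L.length => monomial (tf (L.get i)) (1:ℂ)))
      (LinearMap.ker π) := by
    rw [Submodule.disjoint_def]
    intro x hx hker
    have hmemJ : x ∈ J := by
      rw [LinearMap.mem_ker] at hker
      exact Ideal.Quotient.eq_zero_iff_mem.mp hker
    have hfix : Phi x = x := by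
      clear hker hmemJ
      induction hx using Submodule.span_induction with
      | mem y hy =>
          obtain ⟨i, rfl⟩ := hy
          rw [Phi_monomial, nf_tf (L_P _ (L.get_mem _)), one_smul]
      | zero => rw [map_zero]
      | add y z _ _ hy hz => rw [map_add, hy, hz]
      | smul c y _ hy => rw [map_smul, hy]
    rw [← hfix]
    exact PhiJ x hmemJ
  have u_li : LinearIndependent ℂ u := by
    have h := mono_li.map (f := π) hdisj
    simpa [hu, Function.comp_def] using h
  -- every weight-14 monomial maps into the span of u
  have key : ∀ d : Fin 5 →₀ ℕ, wt5 d = 14 →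
      π (monomial d 1) ∈ Submodule.span ℂ (Set.range u) := by
    intro d hd
    have hv := wt5_def d
    by_cases c4 : 1 ≤ d 4
    · rw [πzero _ (mem4 d c4)]; exact zero_mem _
    by_cases c23 : 1 ≤ d 2 ∧ 3 ≤ d 3
    · rw [πzero _ (mem3 d c23.1 c23.2)]; exact zero_mem _
    by_cases c0 : 13 ≤ d 0
    · rw [πzero _ (mem0 d c0)]; exact zero_mem _
    by_cases c1 : 13 ≤ d 1
    · rw [πzero _ (mem1 d c1)]; exact zero_mem _
    by_cases c27 : d 2 = 7
    · have hde : d = Finsupp.single 2 7 := by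
        ext j; fin_cases j <;> simp [Finsupp.single_apply] <;> omega
      rw [hde, πzero _ mem27]; exact zero_mem _
    by_cases c26 : d 2 = 6
    · -- reduce x₁⁶-monomials
      have h30 : d 3 = 0 := by omega
      have h40 : d 4 = 0 := by omega
      have hPq : Pq (d 0, d 1, 0, 4) := by
        refine ⟨by dsimp only; omega, by dsimp only; omega, by dsimp only; omega,
          by dsimp only; omega, by dsimp only; omega⟩
      have htf : tf (d 0, d 1, 0, 4) = d - Finsupp.single 2 6 + Finsupp.single 3 4 := by
        ext j
        fin_cases j <;>
          simp [tf, Finsupp.tsub_apply, Finsupp.single_apply] <;> omega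
      have hsub : (d - Finsupp.single 2 6 : Fin 5 →₀ ℕ) + Finsupp.single 2 6 = d :=
        sub_single_add (by omega)
      have hkey : monomial d (1:ℂ) =
          monomial (d - Finsupp.single 2 6) 7⁻¹ * pderiv 2 F +
            monomial (tf (d 0, d 1, 0, 4)) 7⁻¹ := by
        rw [hg2, mul_sub, monomial_mul, monomial_mul, mul_one, hsub, htf, sub_add_cancel]
        norm_num
      rw [hkey, map_add, πzero _ (J.mul_mem_left _ (hgJ 2)), zero_add]
      have hsm : monomial (tf (d 0, d 1, 0, 4)) ((7:ℂ)⁻¹) =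
          (7:ℂ)⁻¹ • monomial (tf (d 0, d 1, 0, 4)) 1 := by
        rw [smul_monomial, smul_eq_mul, mul_one]
      rw [hsm, map_smul]
      refine Submodule.smul_mem _ _ (Submodule.subset_span ?_)
      obtain ⟨i, hi⟩ := List.mem_iff_get.mp (mem_L_of_Pq hPq)
      exact ⟨i, by rw [hu]; dsimp only; rw [hi]⟩
    · -- standard monomial
      have h40 : d 4 = 0 := by omega
      have hPq : Pq (d 0, d 1, d 2, d 3) := by
        refine ⟨by dsimp only; omega, by dsimp only; omega, by dsimp only; omega,
          by dsimp only; omega, by dsimp only; omega⟩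
      have htf : tf (d 0, d 1, d 2, d 3) = d := by
        ext j
        fin_cases j <;> simp [tf, Finsupp.single_apply] <;> omega
      refine Submodule.subset_span ?_
      obtain ⟨i, hi⟩ := List.mem_iff_get.mp (mem_L_of_Pq hPq)
      exact ⟨i, by rw [hu]; dsimp only; rw [hi, htf]⟩
  -- identification of the image submodule
  have hspan : Submodule.map π (weightedHomogeneousSubmodule ℂ ![1,1,2,3,7] 14) =
      Submodule.span ℂ (Set.range u) := by
    apply le_antisymm
    · rw [weightedHomogeneousSubmodule_eq_finsupp_supported,
        AddMonoidAlgebra.supported_eq_span_single, Submodule.map_span, Submodule.span_le]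
      rintro _ ⟨_, ⟨dd, hdd, rfl⟩, rfl⟩
      have hwt : wt5 dd = 14 := by
        have := Set.mem_setOf_eq ▸ hdd
        rw [← weight_eq_wt5]
        exact this
      simp only [single_eq_monomial]
      exact key dd hwt
    · rw [Submodule.span_le]
      rintro _ ⟨i, rfl⟩
      refine ⟨monomial (tf (L.get i)) 1, ?_, rfl⟩
      rw [SetLike.mem_coe, mem_weightedHomogeneousSubmodule]
      refine isWeightedHomogeneous_monomial _ _ _ ?_
      rw [weight_eq_wt5, wt5_tf]
      have hmem : L.get i ∈ L := L.get_mem _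
      obtain ⟨h1, h2, h3, h4, h5⟩ := L_P _ hmem
      omega
  rw [hspan, finrank_span_eq_card u_li, Fintype.card_fin]
  exact L_len
end

section
/- Let R' = ℂ[x₀, x₁, x₂] be the polynomial ring in three variables with weights w(x₀) = 1, w(x₁) = 2, w(x₂) = 3, let H = x₀¹⁴ + x₁⁷ − x₂⁴·x₁, and let 𝔍_H ⊆ R' be the ideal generated by the three partial derivatives ∂H/∂x₀, ∂H/∂x₁, ∂H/∂x₂. Then the image in R'/𝔍_H of the ℂ-subspace of weighted-homogeneous polynomials of weighted degree 8 is a ℂ-vector space of dimension 10. -/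
open MvPolynomial Finsupp

namespace Stmt16Aux

noncomputable def e : Fin 10 → (Fin 3 →₀ ℕ)
  | 0 => single 0 8
  | 1 => single 0 6 + single 1 1
  | 2 => single 0 4 + single 1 2
  | 3 => single 0 2 + single 1 3
  | 4 => single 1 4
  | 5 => single 0 5 + single 2 1
  | 6 => single 0 3 + single 1 1 + single 2 1
  | 7 => single 0 1 + single 1 2 + single 2 1
  | 8 => single 0 2 + single 2 2
  | 9 => single 1 1 + single 2 2

def t : Fin 10 → ℕ × ℕ × ℕ
  | 0 => (8,0,0)
  | 1 => (6,1,0)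
  | 2 => (4,2,0)
  | 3 => (2,3,0)
  | 4 => (0,4,0)
  | 5 => (5,0,1)
  | 6 => (3,1,1)
  | 7 => (1,2,1)
  | 8 => (2,0,2)
  | 9 => (0,1,2)

lemma he (k : Fin 10) : (e k 0, e k 1, e k 2) = t k := by
  fin_cases k <;> simp [e, t, Finsupp.single_apply]

lemma e_inj : Function.Injective e := by
  intro k l h
  have h' : t k = t l := by rw [← he, ← he, h]
  have ht : Function.Injective t := by decide
  exact ht h'

lemma weight_eq (v : Fin 3 →₀ ℕ) :
    weight ![1,2,3] v = v 0 * 1 + v 1 * 2 + v 2 * 3 := by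
  rw [weight_apply, Finsupp.sum_fintype]
  · simp [Fin.sum_univ_three]
  · intro i; simp

end Stmt16Aux

namespace Stmt16Aux

lemma fin3_repr (v : Fin 3 →₀ ℕ) :
    v = single 0 (v 0) + single 1 (v 1) + single 2 (v 2) := by
  ext i
  fin_cases i <;> simp [Finsupp.single_apply]

lemma weight_e (k : Fin 10) : weight ![1,2,3] (e k) = 8 := by
  fin_cases k <;> rw [weight_eq] <;> simp [e, Finsupp.single_apply]

lemma span_eq :
    weightedHomogeneousSubmodule ℂ ![1,2,3] 8 =
      Submodule.span ℂ (Set.range fun k : Fin 10 =>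
        (monomial (e k) 1 : MvPolynomial (Fin 3) ℂ)) := by
  apply le_antisymm
  · intro p hp
    rw [mem_weightedHomogeneousSubmodule] at hp
    rw [← p.support_sum_monomial_coeff]
    apply Submodule.sum_mem
    intro v hv
    have hw : weight ![1,2,3] v = 8 := hp (MvPolynomial.mem_support_iff.mp hv)
    rw [weight_eq] at hw
    have hex : ∃ k, e k = v := by
      obtain ⟨a, ha⟩ : ∃ a, v 0 = a := ⟨_, rfl⟩
      obtain ⟨b, hb⟩ : ∃ b, v 1 = b := ⟨_, rfl⟩
      obtain ⟨c, hc⟩ : ∃ c, v 2 = c := ⟨_, rfl⟩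
      rw [ha, hb, hc] at hw
      have hrepr := fin3_repr v
      rw [ha, hb, hc] at hrepr
      have hc2 : c ≤ 2 := by omega
      have hb4 : b ≤ 4 := by omega
      have ha8 : a ≤ 8 := by omega
      interval_cases c <;> interval_cases b <;> interval_cases a <;>
        first
          | omega
          | (refine ⟨0, ?_⟩; rw [hrepr]; simp [e]; done)
          | (refine ⟨1, ?_⟩; rw [hrepr]; simp [e]; done)
          | (refine ⟨2, ?_⟩; rw [hrepr]; simp [e]; done)
          | (refine ⟨3, ?_⟩; rw [hrepr]; simp [e]; done)
          | (refine ⟨4, ?_⟩; rw [hrepr]; simp [e]; done)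
          | (refine ⟨5, ?_⟩; rw [hrepr]; simp [e]; done)
          | (refine ⟨6, ?_⟩; rw [hrepr]; simp [e]; done)
          | (refine ⟨7, ?_⟩; rw [hrepr]; simp [e]; done)
          | (refine ⟨8, ?_⟩; rw [hrepr]; simp [e]; done)
          | (refine ⟨9, ?_⟩; rw [hrepr]; simp [e]; done)
    obtain ⟨k, hk⟩ := hex
    have : (monomial v (coeff v p) : MvPolynomial (Fin 3) ℂ)
        = coeff v p • monomial (e k) 1 := by
      rw [hk, smul_monomial, smul_eq_mul, mul_one]
    rw [this]
    exact Submodule.smul_mem _ _ (Submodule.subset_span ⟨k, rfl⟩)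
  · rw [Submodule.span_le]
    rintro _ ⟨k, rfl⟩
    rw [SetLike.mem_coe, mem_weightedHomogeneousSubmodule]
    exact isWeightedHomogeneous_monomial _ _ _ (weight_e k)

lemma li : LinearIndependent ℂ fun k : Fin 10 =>
    (monomial (e k) 1 : MvPolynomial (Fin 3) ℂ) := by
  have := ((MvPolynomial.basisMonomials (Fin 3) ℂ).linearIndependent).comp e e_inj
  rw [MvPolynomial.coe_basisMonomials] at this
  exact this

lemma comp_mul_eq_zero {w : Fin 3 → ℕ} {f : MvPolynomial (Fin 3) ℂ} {d n : ℕ}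
    (hf : f.IsWeightedHomogeneous w d) (hn : n < d) (c : MvPolynomial (Fin 3) ℂ) :
    weightedHomogeneousComponent w n (c * f) = 0 := by
  classical
  ext m
  rw [coeff_weightedHomogeneousComponent, coeff_zero]
  split_ifs with h
  · rw [coeff_mul]
    apply Finset.sum_eq_zero
    rintro ⟨a, b⟩ hab
    rcases eq_or_ne (coeff b f) 0 with h0 | h0
    · simp [h0]
    · exfalso
      have hb := hf h0
      have hadd : weight w a + weight w b = weight w m := by
        rw [← map_add]
        exact congrArg _ (Finset.HasAntidiagonal.mem_antidiagonal.mp hab)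
      omega
  · rfl

end Stmt16Aux

open Stmt16Aux

/-- For `H = x₀¹⁴ + x₁⁷ - x₂⁴x₁` with weights `(1,2,3)`, the image in
`R'/𝔍_H` of the weighted-homogeneous polynomials of weighted degree `8`
has dimension `10` over `ℂ` (the genus of the curve `V(H) ⊂ ℙ(1,2,3)`). -/
theorem stmt_16 (w : Fin 3 → ℕ) (hw : w = ![1, 2, 3])
    (H : MvPolynomial (Fin 3) ℂ)
    (hH : H = X 0 ^ 14 + X 1 ^ 7 - X 2 ^ 4 * X 1)
    (J : Ideal (MvPolynomial (Fin 3) ℂ))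
    (hJ : J = Ideal.span (Set.range fun i : Fin 3 => pderiv i H)) :
    Module.finrank ℂ
      (Submodule.map (Ideal.Quotient.mkₐ ℂ J).toLinearMap
        (weightedHomogeneousSubmodule ℂ w 8)) = 10 := by
  subst hw hH hJ
  set H : MvPolynomial (Fin 3) ℂ := X 0 ^ 14 + X 1 ^ 7 - X 2 ^ 4 * X 1 with hHdef
  -- the partial derivatives are weighted homogeneous of degrees 13, 12, 11
  have hg0 : pderiv 0 H = monomial (Finsupp.single 0 13) 14 := by
    rw [hHdef]
    simp [pderiv_pow, pderiv_X_self, pderiv_X_of_ne]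
    rw [← C_mul_X_pow_eq_monomial]
    norm_num
    exact (map_ofNat C 14).symm
  have hg1 : pderiv 1 H = monomial (Finsupp.single 1 6) 7
      - monomial (Finsupp.single 2 4) 1 := by
    rw [hHdef]
    simp [pderiv_pow, pderiv_X_self, pderiv_X_of_ne]
    rw [← C_mul_X_pow_eq_monomial, ← C_mul_X_pow_eq_monomial]
    norm_num
    exact (map_ofNat C 7).symm
  have hg2 : pderiv 2 H = - monomial (Finsupp.single 1 1 + Finsupp.single 2 3) 4 := by
    rw [hHdef]
    simp [pderiv_pow, pderiv_X_self, pderiv_X_of_ne]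
    rw [monomial_single_add, ← C_mul_X_pow_eq_monomial, map_ofNat, pow_one]
  have hgen : ∀ i : Fin 3, (pderiv i H).IsWeightedHomogeneous ![1,2,3] (![13,12,11] i) := by
    intro i
    fin_cases i
    · show (pderiv 0 H).IsWeightedHomogeneous ![1,2,3] 13
      rw [hg0]
      exact isWeightedHomogeneous_monomial _ _ _ (by rw [weight_eq]; simp [Finsupp.single_apply])
    · show (pderiv 1 H).IsWeightedHomogeneous ![1,2,3] 12
      rw [hg1, ← mem_weightedHomogeneousSubmodule]
      apply Submodule.sub_mem <;>
        exact isWeightedHomogeneous_monomial _ _ _ (by rw [weight_eq]; simp [Finsupp.single_apply])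
    · show (pderiv 2 H).IsWeightedHomogeneous ![1,2,3] 11
      rw [hg2, ← mem_weightedHomogeneousSubmodule]
      apply Submodule.neg_mem
      exact isWeightedHomogeneous_monomial _ _ _ (by rw [weight_eq]; simp [Finsupp.single_apply])
  -- a weighted-homogeneous polynomial of degree 8 in J is zero
  have hker : ∀ x : MvPolynomial (Fin 3) ℂ, x.IsWeightedHomogeneous ![1,2,3] 8 →
      x ∈ Ideal.span (Set.range fun i : Fin 3 => pderiv i H) → x = 0 := by
    intro x hx hxJ
    rw [Ideal.span, Submodule.mem_span_range_iff_exists_fun] at hxJ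
    obtain ⟨c, hc⟩ := hxJ
    rw [← hx.weightedHomogeneousComponent_same, ← hc, map_sum]
    apply Finset.sum_eq_zero
    intro i _
    rw [smul_eq_mul]
    exact comp_mul_eq_zero (hgen i) (by fin_cases i <;> norm_num) (c i)
  -- conclude
  have hmap : Submodule.map (Ideal.Quotient.mkₐ ℂ
        (Ideal.span (Set.range fun i : Fin 3 => pderiv i H))).toLinearMap
        (weightedHomogeneousSubmodule ℂ ![1,2,3] 8)
      = LinearMap.range ((Ideal.Quotient.mkₐ ℂ
        (Ideal.span (Set.range fun i : Fin 3 => pderiv i H))).toLinearMap ∘ₗ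
        (weightedHomogeneousSubmodule ℂ ![1,2,3] 8).subtype) := by
    rw [LinearMap.range_comp, Submodule.range_subtype]
  rw [hmap, LinearMap.finrank_range_of_inj, span_eq, finrank_span_eq_card li]
  · simp
  · rw [← LinearMap.ker_eq_bot, LinearMap.ker_eq_bot']
    intro x hx0
    have hxJ : (x : MvPolynomial (Fin 3) ℂ) ∈
        Ideal.span (Set.range fun i : Fin 3 => pderiv i H) := by
      rwa [LinearMap.comp_apply, Submodule.subtype_apply, AlgHom.toLinearMap_apply,
        Ideal.Quotient.mkₐ_eq_mk, Ideal.Quotient.eq_zero_iff_mem] at hx0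
    exact Subtype.ext (hker x x.2 hxJ)
end

section
/- Let n ≥ 2, let j ≠ ℓ be two indices in Fin n, let k be a positive integer, and let m_i ≥ 2 be integers for all i ≠ j. If x : Fin n → ℂ satisfies (i) (m_i)·(x i)^(m_i − 1) = 0 for every i ∉ {j, ℓ}, (ii) (m_ℓ)·(x ℓ)^(m_ℓ − 1) + (x j)^k = 0, and (iii) k·(x j)^(k−1)·(x ℓ) = 0, then x = 0. In particular, the polynomial F = Σ_{i ≠ j} x_i^{m_i} + x_j^k·x_ℓ has the property that the only common zero of all its partial derivatives is the origin, i.e. the hypersurface F = 0 is quasi-smooth. -/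
/-!
At a common zero of the partial derivatives, every coordinate `x i` with `i ∉ {j, ℓ}` vanishes
because `m i * x i ^ (m i - 1) = 0`. For the pair `(a, b) = (x j, x ℓ)`, multiplying the
`x j`-derivative by `a` gives `k * a ^ k * b = 0`; either factor being zero forces `a ^ k = 0`
through the `x ℓ`-derivative, and then that derivative reduces to `m ℓ * b ^ (m ℓ - 1) = 0`.
-/

section

variable {R : Type*}

theorem eq_zero_of_natCast_mul_pow_sub_one_eq_zero [Semiring R] [NoZeroDivisors R] [CharZero R]
    {m : ℕ} (hm : 2 ≤ m) {x : R} (h : (m : R) * x ^ (m - 1) = 0) : x = 0 := by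
  have hm0 : (m : R) ≠ 0 := Nat.cast_ne_zero.2 (by omega)
  exact pow_eq_zero_iff (by omega) |>.1 ((mul_eq_zero.1 h).resolve_left hm0)

theorem eq_zero_and_eq_zero_of_partials_pow_add_pow_mul
    [CommSemiring R] [NoZeroDivisors R] [CharZero R]
    {m k : ℕ} (hm : 2 ≤ m) (hk : 0 < k) {a b : R}
    (hb : (m : R) * b ^ (m - 1) + a ^ k = 0) (ha : (k : R) * a ^ (k - 1) * b = 0) :
    a = 0 ∧ b = 0 := by
  have hk0 : (k : R) ≠ 0 := Nat.cast_ne_zero.2 hk.ne'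
  have hkab : (k : R) * (a ^ k * b) = 0 := by
    calc (k : R) * (a ^ k * b) = a * ((k : R) * a ^ (k - 1) * b) := by
          rw [← Nat.sub_one_add_one hk.ne', pow_succ, Nat.add_sub_cancel]; ring
      _ = 0 := by rw [ha, mul_zero]
  have hak : a ^ k = 0 := by
    rcases mul_eq_zero.1 ((mul_eq_zero.1 hkab).resolve_left hk0) with hak | rfl
    · exact hak
    · simpa [zero_pow (show m - 1 ≠ 0 by omega)] using hb
  have ha0 : a = 0 := pow_eq_zero_iff hk.ne' |>.1 hak
  refine ⟨ha0, eq_zero_of_natCast_mul_pow_sub_one_eq_zero hm ?_⟩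
  simpa [hak] using hb

end

theorem stmt_19_general (n : ℕ) (j ℓ : Fin n) (hjl : j ≠ ℓ)
    (k : ℕ) (hk : 0 < k) (m : Fin n → ℕ) (hm : ∀ i, i ≠ j → 2 ≤ m i)
    (x : Fin n → ℂ)
    (h1 : ∀ i, i ≠ j → i ≠ ℓ → (m i : ℂ) * (x i) ^ (m i - 1) = 0)
    (h2 : (m ℓ : ℂ) * (x ℓ) ^ (m ℓ - 1) + (x j) ^ k = 0)
    (h3 : (k : ℂ) * (x j) ^ (k - 1) * (x ℓ) = 0) :
    x = 0 := by
  obtain ⟨hxj, hxℓ⟩ := eq_zero_and_eq_zero_of_partials_pow_add_pow_mul (hm ℓ hjl.symm) hk h2 h3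
  funext i
  by_cases hij : i = j
  · exact hij ▸ hxj
  by_cases hiℓ : i = ℓ
  · exact hiℓ ▸ hxℓ
  exact eq_zero_of_natCast_mul_pow_sub_one_eq_zero (hm i hij) (h1 i hij hiℓ)

/-- Quasi-smoothness of the hypersurface `F = Σ_{i ≠ j} x_i^{m_i} + x_j^k·x_ℓ`:
if all the partial derivatives of `F` vanish at `x : Fin n → ℂ`, then `x = 0`. -/
theorem stmt_19 (n : ℕ) (hn : 2 ≤ n) (j ℓ : Fin n) (hjl : j ≠ ℓ)
    (k : ℕ) (hk : 0 < k) (m : Fin n → ℕ) (hm : ∀ i, i ≠ j → 2 ≤ m i)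
    (x : Fin n → ℂ)
    (h1 : ∀ i, i ≠ j → i ≠ ℓ → (m i : ℂ) * (x i) ^ (m i - 1) = 0)
    (h2 : (m ℓ : ℂ) * (x ℓ) ^ (m ℓ - 1) + (x j) ^ k = 0)
    (h3 : (k : ℂ) * (x j) ^ (k - 1) * (x ℓ) = 0) :
    x = 0 :=
  stmt_19_general n j ℓ hjl k hk m hm x h1 h2 h3
end
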